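/- Let f : Ω → ℝ be symmetric (f(x) = f(−x)) on Ω = {-1,+1}^n, let P be the Glauber dynamics kernel of a symmetric measure μ (μ(x) = μ(−x)) and let P̂ be the corresponding restricted Glauber dynamics kernel on Ω^+ = {x : Σ_i x^i ≥ 0} with stationary measure μ^+. Then the principal solutions h and ĥ of the Poisson equations h − Ph = f − E_μ f and ĥ − P̂ĥ = f − E_{μ^+} f satisfy h(x) = ĥ(x) for x ∈ Ω^+ and h(x) = ĥ(−x) for x ∈ Ω∖Ω^+. In particular h is symmetric: h(x) = h(−x). -/

import Mathlib

open Finset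

/-- Spin value ±1 of a Boolean coordinate. -/
noncomputable def spin (b : Bool) : ℝ := if b then 1 else -1

/-- Configuration `x` with coordinate `i` set to `+1`. -/
noncomputable def up {n : ℕ} (x : Fin n → Bool) (i : Fin n) : Fin n → Bool :=
  Function.update x i true

/-- Configuration `x` with coordinate `i` set to `-1`. -/
noncomputable def dn {n : ℕ} (x : Fin n → Bool) (i : Fin n) : Fin n → Bool :=
  Function.update x i false

/-- Conditional probability `μ_i(1 | x^{(∼i)})`. -/
noncomputable def condProb {n : ℕ} (μ : (Fin n → Bool) → ℝ) (x : Fin n → Bool) (i : Fin n) : ℝ :=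
  μ (up x i) / (μ (up x i) + μ (dn x i))

/-- Glauber dynamics kernel of `μ`, acting on functions. -/
noncomputable def glauberOp {n : ℕ} (μ : (Fin n → Bool) → ℝ) (h : (Fin n → Bool) → ℝ)
    (x : Fin n → Bool) : ℝ :=
  (1 / n) * ∑ i, (condProb μ x i * h (up x i) + (1 - condProb μ x i) * h (dn x i))

/-- Discrete derivative `Δ_i(h)(x) = h(x^{(i,+)}) - h(x^{(i,-)})`. -/
noncomputable def disc {n : ℕ} (i : Fin n) (h : (Fin n → Bool) → ℝ) (x : Fin n → Bool) : ℝ :=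
  h (up x i) - h (dn x i)

/-- Expectation of `f` under the probability mass function `μ`. -/
noncomputable def expect {n : ℕ} (μ : (Fin n → Bool) → ℝ) (f : (Fin n → Bool) → ℝ) : ℝ :=
  ∑ x, μ x * f x

/-- Action of a Markov kernel on functions: `(Pf)(x) = Σ_y P(x,y) f(y)`. -/
noncomputable def act {n : ℕ} (P : (Fin n → Bool) → (Fin n → Bool) → ℝ)
    (f : (Fin n → Bool) → ℝ) (x : Fin n → Bool) : ℝ :=
  ∑ y, P x y * f y

/-- The Glauber dynamics transition kernel of `μ` as a transition matrix. -/
noncomputable def glauberK {n : ℕ} (μ : (Fin n → Bool) → ℝ) (x y : Fin n → Bool) : ℝ :=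
  (1 / n) * ∑ i, ((if y = up x i then condProb μ x i else 0)
    + (if y = dn x i then 1 - condProb μ x i else 0))

/-- Global spin flip. -/
noncomputable def flipc {n : ℕ} (x : Fin n → Bool) : Fin n → Bool := fun i => !x i

/-- Total magnetization `Σ_i x^i`. -/
noncomputable def mag {n : ℕ} (x : Fin n → Bool) : ℝ := ∑ i, spin (x i)

/-- The restricted (censored) Glauber kernel on `Ω⁺ = {x : Σ_i x^i ≥ 0}`:
take a Glauber step and flip all spins if the result leaves `Ω⁺`. -/
noncomputable def restrictedK {n : ℕ} (P : (Fin n → Bool) → (Fin n → Bool) → ℝ)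
    (x y : Fin n → Bool) : ℝ :=
  (if 0 ≤ mag y then P x y else 0) + (if ¬ 0 ≤ mag (flipc y) then P x (flipc y) else 0)

/-- The measure `μ⁺` on `Ω⁺` induced by a symmetric measure `μ`. -/
noncomputable def muPlus {n : ℕ} (μ : (Fin n → Bool) → ℝ) (x : Fin n → Bool) : ℝ :=
  if 0 < mag x then 2 * μ x else if mag x = 0 then μ x else 0

/-!
Since `μ` is flip-symmetric, the global spin flip commutes with the Glauber kernel, so every
iterate `P^t f` of a symmetric `f` is again symmetric. On symmetric functions the censoring
(flipping all spins after leaving `Ω⁺`) is invisible, so `P̂^t f = P^t f`; and `μ⁺` integrates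
symmetric functions exactly as `μ` does. Hence the series defining `h` and `ĥ` agree term by term.
-/

section Flip

variable {n : ℕ}

lemma flipc_involutive : Function.Involutive (flipc (n := n)) :=
  fun x => funext fun i => Bool.not_not (x i)

lemma flipc_injective : Function.Injective (flipc (n := n)) :=
  flipc_involutive.injective

lemma up_flipc (x : Fin n → Bool) (i : Fin n) : up (flipc x) i = flipc (dn x i) := by
  funext j
  simp only [up, dn, flipc, Function.update_apply]
  split <;> simp

lemma dn_flipc (x : Fin n → Bool) (i : Fin n) : dn (flipc x) i = flipc (up x i) := by
  funext j
  simp only [up, dn, flipc, Function.update_apply]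
  split <;> simp

lemma spin_not (b : Bool) : spin (!b) = -spin b := by
  cases b <;> simp [spin]

lemma mag_flipc (x : Fin n → Bool) : mag (flipc x) = -mag x := by
  simp [mag, flipc, spin_not]

lemma sum_comp_flipc {M : Type*} [AddCommMonoid M] (g : (Fin n → Bool) → M) :
    ∑ x, g (flipc x) = ∑ x, g x :=
  Equiv.sum_comp (flipc_involutive.toPerm _) g

end Flip

section Kernels

variable {n : ℕ}

lemma condProb_flipc {μ : (Fin n → Bool) → ℝ} (hμpos : ∀ x, 0 < μ x)
    (hμsymm : ∀ x, μ x = μ (flipc x)) (x : Fin n → Bool) (i : Fin n) :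
    condProb μ (flipc x) i = 1 - condProb μ x i := by
  have hu := hμpos (up x i)
  have hd := hμpos (dn x i)
  rw [condProb, condProb, up_flipc, dn_flipc, ← hμsymm, ← hμsymm]
  field_simp
  ring

lemma glauberK_flipc {μ : (Fin n → Bool) → ℝ} (hμpos : ∀ x, 0 < μ x)
    (hμsymm : ∀ x, μ x = μ (flipc x)) (x y : Fin n → Bool) :
    glauberK μ (flipc x) (flipc y) = glauberK μ x y := by
  unfold glauberK
  congr 1
  refine sum_congr rfl fun i _ => ?_
  simp only [up_flipc, dn_flipc, flipc_injective.eq_iff, condProb_flipc hμpos hμsymm,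
    sub_sub_cancel]
  exact add_comm _ _

variable {P : (Fin n → Bool) → (Fin n → Bool) → ℝ} {g : (Fin n → Bool) → ℝ}

lemma act_flipc (hP : ∀ x y, P (flipc x) (flipc y) = P x y) (hg : ∀ x, g x = g (flipc x))
    (x : Fin n → Bool) : act P g (flipc x) = act P g x := by
  unfold act
  rw [← sum_comp_flipc]
  simp only [hP, ← hg]

lemma iterate_act_flipc (hP : ∀ x y, P (flipc x) (flipc y) = P x y)
    (hg : ∀ x, g x = g (flipc x)) (t : ℕ) (x : Fin n → Bool) :
    (act P)^[t] g x = (act P)^[t] g (flipc x) := by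
  induction t generalizing x with
  | zero => exact hg x
  | succ t ih =>
    rw [Function.iterate_succ_apply', act_flipc hP ih]

lemma act_restrictedK (hg : ∀ x, g x = g (flipc x)) (x : Fin n → Bool) :
    act (restrictedK P) g x = act P g x := by
  unfold act restrictedK
  have hflipped : ∑ y, (if ¬0 ≤ mag (flipc y) then P x (flipc y) else 0) * g y
      = ∑ y, (if ¬0 ≤ mag y then P x y else 0) * g y := by
    rw [← sum_comp_flipc fun y => (if ¬0 ≤ mag y then P x y else 0) * g y]
    simp only [← hg]
  simp only [add_mul, sum_add_distrib]
  rw [hflipped, ← sum_add_distrib]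
  refine sum_congr rfl fun y _ => ?_
  by_cases hy : 0 ≤ mag y <;> simp [hy]

lemma iterate_act_restrictedK (hP : ∀ x y, P (flipc x) (flipc y) = P x y)
    (hg : ∀ x, g x = g (flipc x)) (t : ℕ) :
    (act (restrictedK P))^[t] g = (act P)^[t] g := by
  induction t with
  | zero => rfl
  | succ t ih =>
    funext x
    rw [Function.iterate_succ_apply', Function.iterate_succ_apply', ih,
      act_restrictedK (iterate_act_flipc hP hg t)]

end Kernels

section MuPlus

variable {n : ℕ} {μ : (Fin n → Bool) → ℝ}

lemma muPlus_add_muPlus_flipc (hμsymm : ∀ x, μ x = μ (flipc x)) (x : Fin n → Bool) :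
    muPlus μ x + muPlus μ (flipc x) = μ x + μ (flipc x) := by
  rw [muPlus, muPlus, mag_flipc, ← hμsymm]
  simp only [neg_pos, neg_eq_zero]
  rcases lt_trichotomy (mag x) 0 with hx | hx | hx <;> split_ifs <;> linarith

lemma two_mul_expect_of_flipc {f : (Fin n → Bool) → ℝ} (hf : ∀ x, f x = f (flipc x))
    (ν : (Fin n → Bool) → ℝ) :
    2 * expect ν f = ∑ x, (ν x + ν (flipc x)) * f x := by
  rw [two_mul, _root_.expect]
  nth_rw 2 [← sum_comp_flipc]
  simp only [← hf, ← sum_add_distrib, add_mul]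

lemma expect_muPlus (hμsymm : ∀ x, μ x = μ (flipc x)) {f : (Fin n → Bool) → ℝ}
    (hf : ∀ x, f x = f (flipc x)) :
    expect (muPlus μ) f = expect μ f := by
  refine mul_left_cancel₀ two_ne_zero ?_
  simp only [two_mul_expect_of_flipc hf, muPlus_add_muPlus_flipc hμsymm]

end MuPlus

theorem stmt11_general {n : ℕ} (μ : (Fin n → Bool) → ℝ)
    (hμpos : ∀ x, 0 < μ x) (hμsymm : ∀ x, μ x = μ (flipc x))
    (f : (Fin n → Bool) → ℝ) (hfsymm : ∀ x, f x = f (flipc x))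
    (h hhat : (Fin n → Bool) → ℝ)
    (hdef : h = fun x => ∑' t : ℕ, ((act (glauberK μ))^[t] f x - expect μ f))
    (hhatdef : hhat = fun x =>
      ∑' t : ℕ, ((act (restrictedK (glauberK μ)))^[t] f x - expect (muPlus μ) f)) :
    (∀ x, 0 ≤ mag x → h x = hhat x) ∧
    (∀ x, ¬ 0 ≤ mag x → h x = hhat (flipc x)) ∧
    (∀ x, h x = h (flipc x)) := by
  have hK := glauberK_flipc hμpos hμsymm
  have hhat_eq : hhat = h := by
    simp only [hdef, hhatdef, iterate_act_restrictedK hK hfsymm, expect_muPlus hμsymm hfsymm]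
  have hsymm : ∀ x, h x = h (flipc x) := fun x => by
    simp only [hdef, ← iterate_act_flipc hK hfsymm _ x]
  exact ⟨fun x _ => by rw [hhat_eq], fun x _ => by rw [hhat_eq, hsymm], hsymm⟩

theorem stmt11 {n : ℕ} (hn : 0 < n) (μ : (Fin n → Bool) → ℝ)
    (hμpos : ∀ x, 0 < μ x) (hμsum : ∑ x, μ x = 1)
    (hμsymm : ∀ x, μ x = μ (flipc x))
    (f : (Fin n → Bool) → ℝ) (hfsymm : ∀ x, f x = f (flipc x))
    (h hhat : (Fin n → Bool) → ℝ)
    (hdef : h = fun x => ∑' t : ℕ, ((act (glauberK μ))^[t] f x - expect μ f))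
    (hhatdef : hhat = fun x =>
      ∑' t : ℕ, ((act (restrictedK (glauberK μ)))^[t] f x - expect (muPlus μ) f)) :
    (∀ x, 0 ≤ mag x → h x = hhat x) ∧
    (∀ x, ¬ 0 ≤ mag x → h x = hhat (flipc x)) ∧
    (∀ x, h x = h (flipc x)) :=
  stmt11_general μ hμpos hμsymm f hfsymm h hhat hdef hhatdef
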